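/- Let μ be a Borel probability measure on S^m satisfying μ(ω) < σ(ω_{π/2}) for every nonempty compact spherically convex ω ⊊ S^m. Then there exists ε > 0 such that for every nonempty compact spherically convex ω ⊊ S^m, μ(S^m \ ω) > σ(ω*) + ε. -/

import Mathlib

open MeasureTheory Metric Set Real
open scoped ENNReal

noncomputable section

abbrev Euc (m : ℕ) : Type := EuclideanSpace ℝ (Fin (m + 1))

abbrev Sph (m : ℕ) : Type := Metric.sphere (0 : Euc m) 1

/-- geodesic distance on the sphere -/
def gdist {m : ℕ} (n x : Sph m) : ℝ :=
  Real.arccos (inner ℝ (n : Euc m) (x : Euc m))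

/-- the logarithmic cost, with values in `[0,∞]` -/
def cost {m : ℕ} (n x : Sph m) : ℝ≥0∞ :=
  if 0 < (inner ℝ (n : Euc m) (x : Euc m) : ℝ) then
    ENNReal.ofReal (-Real.log (inner ℝ (n : Euc m) (x : Euc m))) else ∞

/-- the uniform probability measure on the sphere -/
def unif (m : ℕ) : Measure (Sph m) :=
  ((volume : Measure (Euc m)).toSphere Set.univ)⁻¹ • (volume : Measure (Euc m)).toSphere

/-- the radial function of a set with respect to the origin -/
def radial {m : ℕ} (Ω : Set (Euc m)) (x : Sph m) : ℝ :=
  sSup {s : ℝ | 0 ≤ s ∧ s • (x : Euc m) ∈ Ω}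

/-- the Euclidean cone generated by a subset of the sphere -/
def cone {m : ℕ} (A : Set (Sph m)) : Set (Euc m) :=
  {y | ∃ r : ℝ, 0 ≤ r ∧ ∃ x ∈ A, y = r • (x : Euc m)}

/-- a subset of the sphere is spherically convex if the cone it generates is convex -/
def SphConvex {m : ℕ} (A : Set (Sph m)) : Prop := Convex ℝ (cone A)

/-- open `r`-neighbourhood for the geodesic distance -/
def nbhd {m : ℕ} (V : Set (Sph m)) (r : ℝ) : Set (Sph m) :=
  {y | ∃ x ∈ V, gdist y x < r}

/-- the spherical polar set -/
def spolar {m : ℕ} (ω : Set (Sph m)) : Set (Sph m) :=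
  {y | ∀ x ∈ ω, (inner ℝ (y : Euc m) (x : Euc m) : ℝ) ≤ 0}

/-- the support function of a star-shaped set -/
def suppFn {m : ℕ} (F : Set (Euc m)) (n : Sph m) : ℝ :=
  ⨆ x : Sph m, radial F x * (inner ℝ (x : Euc m) (n : Euc m) : ℝ)

/-- the polar set in Euclidean space -/
def polar {m : ℕ} (F : Set (Euc m)) : Set (Euc m) :=
  {n | ∀ x ∈ F, (inner ℝ x n : ℝ) ≤ 1}

/-- the logarithmic cost, with values in `ℝ ∪ {±∞}` -/
def costE {m : ℕ} (n x : Sph m) : EReal :=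
  if 0 < (inner ℝ (n : Euc m) (x : Euc m) : ℝ) then
    ((-Real.log (inner ℝ (n : Euc m) (x : Euc m)) : ℝ) : EReal) else ⊤


/-!
Since `ω_{π/2}` is the complement of `ω*`, Alexandrov's condition says `σ(ω*) + μ(ω) < 1` for
every admissible `ω`; the point is to make the gap uniform by compactness in the Hausdorff metric.
A separating hyperplane puts each admissible `ω` in a closed hemisphere `{⟪x, n⟫ ≤ 0}`, so `n` is at
distance `≥ √2` from `ω` and `ω` stays at Hausdorff distance `≥ 1` from the whole sphere. The
spherically convex compact sets at distance `≥ 1` from the sphere form a closed, hence compact,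
family of admissible sets. On it `ω ↦ σ(ω*) + μ(ω)` is upper semicontinuous, because a set close to
`ω` lies in a small thickening of `ω` and its polar in a slightly relaxed polar of `ω`; so it attains
a maximum `< 1`, and the remaining gap is `ε`.
-/

open Filter Topology TopologicalSpace
open scoped RealInnerProductSpace

namespace TopologicalSpace.NonemptyCompacts

variable {α : Type*} [MetricSpace α]

theorem isClosed_setOf_mem : IsClosed {p : α × NonemptyCompacts α | p.1 ∈ p.2} := by
  have h : {p : α × NonemptyCompacts α | p.1 ∈ p.2} = {p | infDist p.1 p.2 = 0} := by
    ext ⟨x, K⟩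
    exact K.isCompact.isClosed.mem_iff_infDist_zero K.nonempty
  rw [h]
  exact isClosed_eq lipschitz_infDist.continuous continuous_const

theorem exists_seq_mem_tendsto {K : ℕ → NonemptyCompacts α} {L : NonemptyCompacts α}
    (hK : Tendsto K atTop (𝓝 L)) {x : α} (hx : x ∈ L) :
    ∃ y : ℕ → α, (∀ j, y j ∈ K j) ∧ Tendsto y atTop (𝓝 x) := by
  choose y hy hdist using fun j => (K j).isCompact.exists_infDist_eq_dist (K j).nonempty x
  refine ⟨y, hy, tendsto_iff_dist_tendsto_zero.2 ?_⟩
  have h := ((lipschitz_infDist_set x).continuous.tendsto L).comp hK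
  rw [(L.isCompact.isClosed.mem_iff_infDist_zero L.nonempty).1 hx] at h
  simpa [Function.comp_def, hdist, dist_comm] using h

theorem subset_cthickening_of_dist_lt {K L : NonemptyCompacts α} {r : ℝ} (h : dist K L < r) :
    (K : Set α) ⊆ cthickening r L := fun x hx => by
  obtain ⟨y, hy, hxy⟩ := exists_dist_lt_of_hausdorffDist_lt hx h (edist_ne_top K L)
  exact mem_cthickening_of_dist_le x y r L hy hxy.le

end TopologicalSpace.NonemptyCompacts

section Semicontinuity

variable {X α : Type*} [TopologicalSpace X] [MeasurableSpace α]

theorem upperSemicontinuous_measure_of_approx (ν : Measure α) [IsFiniteMeasure ν]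
    {F : X → Set α} {G : X → ℝ → Set α} (hG : ∀ x r, MeasurableSet (G x r))
    (hmono : ∀ x, Monotone (G x)) (hinter : ∀ x, ⋂ r > 0, G x r ⊆ F x)
    (hnear : ∀ x, ∀ r > 0, ∀ᶠ y in 𝓝 x, F y ⊆ G x r) :
    UpperSemicontinuous fun x => ν (F x) := by
  intro x c hc
  have hlim : Tendsto (ν ∘ G x) (𝓝[>] 0) (𝓝 (ν (⋂ r > 0, G x r))) :=
    tendsto_measure_biInter_gt (fun r _ => (hG x r).nullMeasurableSet)
      (fun _ _ _ hij => hmono x hij) ⟨1, one_pos, measure_ne_top _ _⟩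
  obtain ⟨r, hr, hr0⟩ := ((hlim.eventually (gt_mem_nhds
    ((measure_mono (hinter x)).trans_lt hc))).and self_mem_nhdsWithin).exists
  exact (hnear x r hr0).mono fun y hy => (measure_mono hy).trans_lt hr

theorem upperSemicontinuous_measure_nonemptyCompacts [MetricSpace α] [OpensMeasurableSpace α]
    (μ : Measure α) [IsFiniteMeasure μ] :
    UpperSemicontinuous fun K : NonemptyCompacts α => μ K := by
  refine upperSemicontinuous_measure_of_approx μ (G := fun K r => cthickening r (K : Set α))
    (fun K r => isClosed_cthickening.measurableSet) (fun K _ _ h => cthickening_mono h _)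
    (fun K => ?_) (fun K r hr => ?_)
  · rw [← closure_eq_iInter_cthickening, K.isCompact.isClosed.closure_eq]
  · exact Filter.mem_of_superset (ball_mem_nhds K hr) fun K' hK' =>
      NonemptyCompacts.subset_cthickening_of_dist_lt hK'

end Semicontinuity

section Sphere

variable {m : ℕ}

instance : IsProbabilityMeasure (unif m) :=
  haveI : NeZero (volume : Measure (Euc m)).toSphere := ⟨Measure.toSphere_ne_zero _⟩
  isProbabilityMeasureSMul

instance : Nonempty (Sph m) :=
  (NormedSpace.sphere_nonempty.2 zero_le_one).to_subtype

theorem nbhd_pi_div_two_eq_compl_spolar (ω : Set (Sph m)) : nbhd ω (π / 2) = (spolar ω)ᶜ := by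
  ext y
  simp [nbhd, spolar, gdist, arccos_lt_pi_div_two]

theorem isClosed_setOf_forall_inner_le (ω : Set (Sph m)) (r : ℝ) :
    IsClosed {y : Sph m | ∀ x ∈ ω, ⟪(y : Euc m), x⟫ ≤ r} := by
  simp only [ofPred_forall]
  exact isClosed_biInter fun x _ =>
    isClosed_le (continuous_subtype_val.inner continuous_const) continuous_const

theorem isClosed_spolar (ω : Set (Sph m)) : IsClosed (spolar ω) :=
  isClosed_setOf_forall_inner_le ω 0

theorem upperSemicontinuous_measure_spolar (ν : Measure (Sph m)) [IsFiniteMeasure ν] :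
    UpperSemicontinuous fun K : NonemptyCompacts (Sph m) => ν (spolar K) := by
  refine upperSemicontinuous_measure_of_approx ν
    (G := fun K r => {y : Sph m | ∀ x ∈ (K : Set (Sph m)), ⟪(y : Euc m), x⟫ ≤ r})
    (fun K r => (isClosed_setOf_forall_inner_le _ r).measurableSet)
    (fun K r s hrs y hy x hx => (hy x hx).trans hrs) (fun K y hy x hx => ?_) (fun K r hr => ?_)
  · exact le_of_forall_pos_le_add fun ε hε => by simpa using mem_iInter₂.1 hy ε hε x hx
  · refine Filter.mem_of_superset (ball_mem_nhds K hr) fun K' hK' y hy x hx => ?_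
    obtain ⟨x', hx', hxx'⟩ := exists_dist_lt_of_hausdorffDist_lt hx
      (mem_ball'.1 hK') (edist_ne_top K K')
    calc ⟪(y : Euc m), x⟫ = ⟪(y : Euc m), x'⟫ + ⟪(y : Euc m), (x : Euc m) - x'⟫ := by
          rw [inner_sub_right]; ring
      _ ≤ 0 + ‖(x : Euc m) - x'‖ := by
          gcongr
          · exact hy x' hx'
          · simpa [norm_eq_of_mem_sphere] using real_inner_le_norm (y : Euc m) ((x : Euc m) - x')
      _ ≤ r := by rw [zero_add, ← dist_eq_norm]; exact hxx'.le

end Sphere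

section Cone

variable {m : ℕ}

theorem mem_cone_iff {A : Set (Sph m)} {v : Euc m} :
    v ∈ cone A ↔ ∃ x ∈ A, v = ‖v‖ • (x : Euc m) := by
  constructor
  · rintro ⟨r, hr, x, hx, rfl⟩
    refine ⟨x, hx, ?_⟩
    rw [norm_smul, norm_eq_of_mem_sphere, mul_one, Real.norm_of_nonneg hr]
  · rintro ⟨x, hx, hv⟩
    exact ⟨‖v‖, norm_nonneg v, x, hx, hv⟩

theorem smul_mem_cone {A : Set (Sph m)} {v : Euc m} (hv : v ∈ cone A) {r : ℝ} (hr : 0 ≤ r) :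
    r • v ∈ cone A := by
  obtain ⟨s, hs, x, hx, rfl⟩ := hv
  exact ⟨r * s, mul_nonneg hr hs, x, hx, smul_smul r s _⟩

theorem isClosed_setOf_mem_cone :
    IsClosed {p : NonemptyCompacts (Sph m) × Euc m | p.2 ∈ cone (p.1 : Set (Sph m))} := by
  have hT : IsClosed {q : (NonemptyCompacts (Sph m) × Euc m) × Sph m |
      q.2 ∈ q.1.1 ∧ q.1.2 = ‖q.1.2‖ • (q.2 : Euc m)} :=
    (NonemptyCompacts.isClosed_setOf_mem.preimage
      (continuous_snd.prodMk (continuous_fst.comp continuous_fst))).inter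
      (isClosed_eq (continuous_snd.comp continuous_fst)
        ((continuous_snd.comp continuous_fst).norm.smul (continuous_subtype_val.comp continuous_snd)))
  convert isClosedMap_fst_of_compactSpace _ hT using 1
  ext ⟨K, v⟩
  simp [mem_cone_iff]

theorem isClosed_cone {A : Set (Sph m)} (hA : IsCompact A) (hne : A.Nonempty) :
    IsClosed (cone A) :=
  isClosed_setOf_mem_cone.preimage
    (Continuous.prodMk_right (⟨⟨A, hA⟩, hne⟩ : NonemptyCompacts (Sph m)))

theorem isClosed_setOf_sphConvex :
    IsClosed {K : NonemptyCompacts (Sph m) | SphConvex (K : Set (Sph m))} := by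
  refine IsSeqClosed.isClosed fun K L hK hKL => ?_
  rintro _ ⟨r, hr, x, hx, rfl⟩ _ ⟨t, ht, y, hy, rfl⟩ a b ha hb hab
  obtain ⟨xs, hxs, hxs_lim⟩ := NonemptyCompacts.exists_seq_mem_tendsto hKL hx
  obtain ⟨ys, hys, hys_lim⟩ := NonemptyCompacts.exists_seq_mem_tendsto hKL hy
  have hlim : Tendsto (fun j => a • r • (xs j : Euc m) + b • t • (ys j : Euc m)) atTop
      (𝓝 (a • r • (x : Euc m) + b • t • (y : Euc m))) :=
    ((((continuous_subtype_val.tendsto x).comp hxs_lim).const_smul r).const_smul a).add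
      ((((continuous_subtype_val.tendsto y).comp hys_lim).const_smul t).const_smul b)
  exact isClosed_setOf_mem_cone.mem_of_tendsto (hKL.prodMk_nhds hlim) <|
    Eventually.of_forall fun j =>
      hK j ⟨r, hr, xs j, hxs j, rfl⟩ ⟨t, ht, ys j, hys j, rfl⟩ ha hb hab

theorem exists_inner_nonpos_of_sphConvex {ω : Set (Sph m)} (hne : ω.Nonempty)
    (hcp : IsCompact ω) (hcv : SphConvex ω) (hpr : ω ≠ univ) :
    ∃ n : Sph m, ∀ x ∈ ω, ⟪(x : Euc m), n⟫ ≤ 0 := by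
  obtain ⟨p, hp⟩ := (ne_univ_iff_exists_notMem ω).1 hpr
  let C : ProperCone ℝ (Euc m) :=
    { carrier := cone ω
      add_mem' := fun {u v} hu hv => by
        simpa [smul_add, smul_smul] using smul_mem_cone
          (hcv hu hv (by norm_num : (0 : ℝ) ≤ 1 / 2) (by norm_num : (0 : ℝ) ≤ 1 / 2) (by norm_num))
          (by norm_num : (0 : ℝ) ≤ 2)
      zero_mem' := ⟨0, le_rfl, hne.some, hne.some_mem, (zero_smul _ _).symm⟩
      smul_mem' := fun c v hv => smul_mem_cone hv c.2
      isClosed' := isClosed_cone hcp hne }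
  have hpC : (p : Euc m) ∉ C := fun h => by
    obtain ⟨x, hx, hpx⟩ := mem_cone_iff.1 h
    rw [norm_eq_of_mem_sphere, one_smul] at hpx
    exact hp (Subtype.ext hpx ▸ hx)
  obtain ⟨y, hyC, hpy⟩ := C.hyperplane_separation' hpC
  have hy : y ≠ 0 := by rintro rfl; simp at hpy
  refine ⟨⟨-‖y‖⁻¹ • y, by simp [norm_smul, hy]⟩, fun x hx => ?_⟩
  have hxy : 0 ≤ ⟪(x : Euc m), y⟫ := hyC x ⟨1, zero_le_one, x, hx, (one_smul _ _).symm⟩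
  rw [inner_smul_right]
  exact mul_nonpos_of_nonpos_of_nonneg (neg_nonpos.2 (by positivity)) hxy

theorem one_le_dist_top_of_inner_nonpos {K : NonemptyCompacts (Sph m)} {n : Sph m}
    (hn : ∀ x ∈ K, ⟪(x : Euc m), n⟫ ≤ 0) : 1 ≤ dist K ⊤ := by
  rw [dist_comm, NonemptyCompacts.dist_eq]
  refine le_trans ?_ (infDist_le_hausdorffDist_of_mem (x := n) (by simp) (edist_ne_top ⊤ K))
  refine (le_infDist K.nonempty).2 fun x hx => ?_
  have hsq : ‖(n : Euc m) - x‖ ^ 2 = 2 - 2 * ⟪(x : Euc m), n⟫ := by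
    rw [norm_sub_sq_real, norm_eq_of_mem_sphere, norm_eq_of_mem_sphere, real_inner_comm]
    ring
  rw [Subtype.dist_eq, dist_eq_norm]
  nlinarith [hn x hx, norm_nonneg ((n : Euc m) - x)]

theorem isCompact_setOf_sphConvex_one_le_dist_top :
    IsCompact {K : NonemptyCompacts (Sph m) | SphConvex (K : Set (Sph m)) ∧ 1 ≤ dist K ⊤} :=
  (isClosed_setOf_sphConvex.inter
    (isClosed_le continuous_const (continuous_id.dist continuous_const))).isCompact

end Cone

theorem IsCompact.exists_pos_forall_add_lt {X : Type*} [TopologicalSpace X] {S : Set X}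
    (hS : IsCompact S) {f : X → ℝ≥0∞} (hf : UpperSemicontinuousOn f S) {c : ℝ≥0∞}
    (hlt : ∀ x ∈ S, f x < c) : ∃ ε > 0, ∀ x ∈ S, f x + ε < c := by
  rcases S.eq_empty_or_nonempty with rfl | hne
  · exact ⟨1, one_pos, by simp⟩
  obtain ⟨a, ha, hmax⟩ := hf.exists_isMaxOn hne hS
  obtain ⟨b, hab, hbc⟩ := exists_between (hlt a ha)
  refine ⟨b - f a, tsub_pos_of_lt hab, fun x hx => ?_⟩
  calc f x + (b - f a) ≤ f a + (b - f a) := by gcongr; exact hmax hx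
    _ = b := add_tsub_cancel_of_le hab.le
    _ < c := hbc

/-- reinforcement of Alexandrov's condition using the spherical polar. -/
theorem alexandrov_reinforced_polar (m : ℕ) (μ : Measure (Sph m))
    [IsProbabilityMeasure μ]
    (halex : ∀ ω : Set (Sph m), ω.Nonempty → IsCompact ω → SphConvex ω → ω ≠ Set.univ →
      μ ω < unif m (nbhd ω (π / 2))) :
    ∃ ε : ℝ≥0∞, 0 < ε ∧
      ∀ ω : Set (Sph m), ω.Nonempty → IsCompact ω → SphConvex ω → ω ≠ Set.univ →
        unif m (spolar ω) + ε < μ ωᶜ := by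
  have hlt : ∀ K ∈ {K : NonemptyCompacts (Sph m) | SphConvex (K : Set (Sph m)) ∧ 1 ≤ dist K ⊤},
      unif m (spolar K) + μ K < 1 := by
    rintro K ⟨hcv, hdist⟩
    have hK : (K : Set (Sph m)) ≠ univ := fun h => by
      rw [← NonemptyCompacts.coe_top, SetLike.coe_set_eq] at h
      rw [h, dist_self] at hdist
      exact zero_lt_one.not_ge hdist
    have h := halex K K.nonempty K.isCompact hcv hK
    rwa [nbhd_pi_div_two_eq_compl_spolar, prob_compl_eq_one_sub
      (isClosed_spolar _).measurableSet, lt_tsub_iff_left] at h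
  have husc : UpperSemicontinuous fun K : NonemptyCompacts (Sph m) => unif m (spolar K) + μ K :=
    (upperSemicontinuous_measure_spolar (unif m)).add'
      (upperSemicontinuous_measure_nonemptyCompacts μ) fun _ => continuous_add.continuousAt
  obtain ⟨ε, hε, hS⟩ := isCompact_setOf_sphConvex_one_le_dist_top.exists_pos_forall_add_lt
    (husc.upperSemicontinuousOn _) hlt
  refine ⟨ε, hε, fun ω hne hcp hcv hpr => ?_⟩
  obtain ⟨n, hn⟩ := exists_inner_nonpos_of_sphConvex hne hcp hcv hpr
  have h := hS ⟨⟨ω, hcp⟩, hne⟩ ⟨hcv, one_le_dist_top_of_inner_nonpos hn⟩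
  rw [prob_compl_eq_one_sub hcp.measurableSet, lt_tsub_iff_right]
  rwa [add_right_comm] at h
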